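/- Let a clause state with bound m (relative to a CNF I and a trail τ) satisfy Inv1, Inv3, and Inv4, and let n ≤ m. Define a state with bound n by: D'_q := D_q ∪ ⋃_{n < i ≤ m} Sᵢ^q for each q ≤ n; D'∞ := D∞; and S'ᵢ^q := Sᵢ^q for all q < i ≤ n (so all clauses of Dᵢ with n < i ≤ m are deleted, every clause stashed at a level above n with restoration level q ≤ n is restored into D_q, and clauses stashed at a level above n with restoration level above n are deleted). Then this state with bound n satisfies Inv1, Inv2, Inv3, and Inv4 (with n as the bound in Inv2 and Inv3); i.e., the full Backtrack procedure preserves all BI invariants. -/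

import Mathlib

/-- A variable is a natural number. -/
abbrev Var := ℕ

/-- A literal is a pair of a variable and a Boolean polarity. -/
abbrev Lit := Var × Bool

/-- The negation of a literal flips its polarity. -/
def Lit.neg (l : Lit) : Lit := (l.1, !l.2)

/-- A clause is a finite set of literals. -/
abbrev Clause := Finset Lit

/-- A total assignment. -/
abbrev Assignment := Var → Bool

/-- A trail is a finite list of (literal, decision level) pairs. -/
abbrev Trail := List (Lit × ℕ)

/-- An assignment satisfies a literal `(v, b)` iff it assigns `b` to `v`. -/
def SatLit (σ : Assignment) (l : Lit) : Prop := σ l.1 = l.2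

/-- An assignment satisfies a clause iff it satisfies one of its literals. -/
def SatClause (σ : Assignment) (c : Clause) : Prop := ∃ l ∈ c, SatLit σ l

/-- An assignment satisfies a set of clauses iff it satisfies every clause in it. -/
def SatSet (σ : Assignment) (Γ : Set Clause) : Prop := ∀ c ∈ Γ, SatClause σ c

/-- Entry `i` of trail `τ` is a decision: its level is positive and
no earlier entry has the same level. -/
def IsDecision (τ : Trail) (i : Fin τ.length) : Prop :=
  0 < (τ.get i).2 ∧ ∀ j : Fin τ.length, j < i → (τ.get j).2 ≠ (τ.get i).2

/-- `τ` is a trail for the input CNF `I`. -/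
structure IsTrail (I : Finset Clause) (τ : Trail) : Prop where
  nodupVars : (τ.map (fun e => e.1.1)).Nodup
  levelsMono : (τ.map Prod.snd).Pairwise (· ≤ ·)
  implied : ∀ i : Fin τ.length, ¬ IsDecision τ i →
    ∀ σ : Assignment, SatSet σ ↑I →
      (∀ j : Fin τ.length, j < i → IsDecision τ j → SatLit σ (τ.get j).1) →
      SatLit σ (τ.get i).1

/-- `τ^{≤d}`: the longest prefix of `τ` whose entries all have level `≤ d`. -/
def Trail.upTo (τ : Trail) (d : ℕ) : Trail := τ.takeWhile (fun e => e.2 ≤ d)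

/-- An assignment satisfies (the literal of) every entry of a trail. -/
def SatTrail (σ : Assignment) (τ : Trail) : Prop := ∀ e ∈ τ, SatLit σ e.1

/-- `Γ →^d Δ` relative to `τ`. -/
def ImpliesAt (τ : Trail) (d : ℕ) (Γ Δ : Set Clause) : Prop :=
  ∀ σ : Assignment, SatTrail σ (τ.upTo d) → SatSet σ Γ → SatSet σ Δ

/-- `Γ ↔^d Δ` relative to `τ`. -/
def EquivAt (τ : Trail) (d : ℕ) (Γ Δ : Set Clause) : Prop :=
  ImpliesAt τ d Γ Δ ∧ ImpliesAt τ d Δ Γ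

/-- `α^{≤d}`: literals of `α` whose negation is not the literal of any entry of `τ^{≤d}`. -/
def Clause.upTo (τ : Trail) (d : ℕ) (α : Clause) : Clause :=
  α.filter (fun l => ∀ e ∈ τ.upTo d, e.1 ≠ Lit.neg l)

/-- `α` d-subsumes `β` (relative to `τ`). -/
def SubsumesAt (τ : Trail) (d : ℕ) (α β : Clause) : Prop :=
  Clause.upTo τ d α ⊆ Clause.upTo τ d β

/-- `α` min-k-subsumes `β` (relative to `τ`). -/
def MinSubsumesAt (τ : Trail) (k : ℕ) (α β : Clause) : Prop :=
  SubsumesAt τ k α β ∧ ∀ d' < k, ¬ SubsumesAt τ d' α β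

/-- `α` and `β` are resolvable on `x`. -/
def Resolvable (α β : Clause) (x : Var) : Prop := (x, true) ∈ α ∧ (x, false) ∈ β

/-- The resolveOn `α ⊗ₓ β`. -/
def resolveOn (α β : Clause) (x : Var) : Clause := α.erase (x, true) ∪ β.erase (x, false)

/-- A clause state: groups `Dᵢ` (meaningful for `i ≤ n`), temporary clauses `D∞`,
and stashed groups `Sᵢ^q` (meaningful for `q < i ≤ n`). -/
structure ClauseState where
  D : ℕ → Set Clause
  Dinf : Set Clause
  Stash : ℕ → ℕ → Set Clause

/-- `Sᵢ := ⋃_{q<i} Sᵢ^q`. -/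
def ClauseState.Sl (st : ClauseState) (i : ℕ) : Set Clause :=
  {α | ∃ q < i, α ∈ st.Stash i q}

/-- `S := ⋃_{1≤i≤n} Sᵢ`. -/
def ClauseState.Sall (st : ClauseState) (n : ℕ) : Set Clause :=
  {α | ∃ i, 1 ≤ i ∧ i ≤ n ∧ α ∈ st.Sl i}

/-- `S⁰ := ⋃_{0<i≤n} Sᵢ^0`. -/
def ClauseState.S0 (st : ClauseState) (n : ℕ) : Set Clause :=
  {α | ∃ i, 0 < i ∧ i ≤ n ∧ α ∈ st.Stash i 0}

/-- The pervasive clauses `P := D₀ ∪ S⁰`. -/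
def ClauseState.P (st : ClauseState) (n : ℕ) : Set Clause := st.D 0 ∪ st.S0 n

/-- The active-non-temporary clauses `N := ⋃_{0≤i≤n} Dᵢ`. -/
def ClauseState.N (st : ClauseState) (n : ℕ) : Set Clause := {α | ∃ i ≤ n, α ∈ st.D i}

/-- The active clauses `A := N ∪ D∞`. -/
def ClauseState.A (st : ClauseState) (n : ℕ) : Set Clause := st.N n ∪ st.Dinf

/-- Inv1 (input-equivalence): `I ↔⁰ P`. -/
def Inv1 (I : Finset Clause) (τ : Trail) (st : ClauseState) (n : ℕ) : Prop :=
  EquivAt τ 0 ↑I (st.P n)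

/-- Inv2 (correctness): `N ↔ⁿ P`. -/
def Inv2 (τ : Trail) (st : ClauseState) (n : ℕ) : Prop :=
  EquivAt τ n (st.N n) (st.P n)

/-- The representation condition on a clause `α` stashed at level `i`. -/
def Represented (τ : Trail) (st : ClauseState) (n i : ℕ) (α : Clause) : Prop :=
  (∃ r ≤ i, ∃ β ∈ st.D r, ImpliesAt τ i {β} {α}) ∨
  (∃ r ≤ i, ∃ j, i < j ∧ j ≤ n ∧ ∃ β ∈ st.Stash j r, ImpliesAt τ i {β} {α}) ∨
  ImpliesAt τ i ∅ {α}

/-- Inv3 (representation). -/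
def Inv3 (τ : Trail) (st : ClauseState) (n : ℕ) : Prop :=
  ∀ i, 1 ≤ i → i ≤ n → ∀ α ∈ st.Sl i, Represented τ st n i α

/-- Inv4 (closure): every active or stashed clause is 0-implied by `P`. -/
def Inv4 (τ : Trail) (st : ClauseState) (n : ℕ) : Prop :=
  ∀ γ ∈ st.A n ∪ st.Sall n, ImpliesAt τ 0 (st.P n) {γ}

/-- All four BI invariants. -/
def Invs (I : Finset Clause) (τ : Trail) (st : ClauseState) (n : ℕ) : Prop :=
  Inv1 I τ st n ∧ Inv2 τ st n ∧ Inv3 τ st n ∧ Inv4 τ st n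

lemma mem_upTo_mono {τ : Trail} {d d' : ℕ} (h : d ≤ d') {e : Lit × ℕ}
    (he : e ∈ τ.upTo d) : e ∈ τ.upTo d' := by
  induction τ with
  | nil => simp [Trail.upTo] at he
  | cons a t ih =>
    simp only [Trail.upTo, List.takeWhile] at he ⊢
    by_cases ha : a.2 ≤ d
    · have ha' : a.2 ≤ d' := ha.trans h
      simp [ha, ha'] at he ⊢
      rcases he with he | he
      · exact Or.inl he
      · exact Or.inr (ih he)
    · simp [ha] at he

lemma satTrail_anti {σ : Assignment} {τ : Trail} {d d' : ℕ} (h : d ≤ d')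
    (hs : SatTrail σ (τ.upTo d')) : SatTrail σ (τ.upTo d) :=
  fun e he => hs e (mem_upTo_mono h he)

lemma impliesAt_mono {τ : Trail} {d d' : ℕ} {Γ Δ : Set Clause} (h : d ≤ d')
    (H : ImpliesAt τ d Γ Δ) : ImpliesAt τ d' Γ Δ :=
  fun σ hs hΓ => H σ (satTrail_anti h hs) hΓ

lemma impliesAt_weaken {τ : Trail} {d : ℕ} {Γ Γ' Δ : Set Clause} (h : Γ ⊆ Γ')
    (H : ImpliesAt τ d Γ Δ) : ImpliesAt τ d Γ' Δ :=
  fun σ hs hΓ => H σ hs (fun c hc => hΓ c (h hc))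

lemma impliesAt_trans {τ : Trail} {d : ℕ} {Γ Δ E : Set Clause}
    (H1 : ImpliesAt τ d Γ Δ) (H2 : ImpliesAt τ d Δ E) : ImpliesAt τ d Γ E :=
  fun σ hs hΓ => H2 σ hs (H1 σ hs hΓ)

lemma impliesAt_of_mem {τ : Trail} {d : ℕ} {Γ : Set Clause} {α : Clause}
    (h : α ∈ Γ) : ImpliesAt τ d Γ {α} := by
  intro σ hs hΓ c hc
  have : c = α := hc
  subst this
  exact hΓ c h

/-- the full Backtrack procedure from bound `m` to bound `n ≤ m`
(delete all `D_i` with `n < i ≤ m`, restore every clause stashed at a level above `n`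
with restoration level `q ≤ n` into `D_q`, delete the remaining stashed clauses above
`n`) preserves all BI invariants. -/
theorem stmt9 (I : Finset Clause) (τ : Trail) (hτ : IsTrail I τ)
    (st : ClauseState) (m n : ℕ) (hnm : n ≤ m)
    (h1 : Inv1 I τ st m) (h3 : Inv3 τ st m) (h4 : Inv4 τ st m)
    (st' : ClauseState)
    (hD : st'.D = fun q => if q ≤ n then
        st.D q ∪ {γ | ∃ i, n < i ∧ i ≤ m ∧ γ ∈ st.Stash i q} else ∅)
    (hDinf : st'.Dinf = st.Dinf)
    (hS : st'.Stash = fun j q => if j ≤ n then st.Stash j q else ∅) :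
    Invs I τ st' n := by
  
  have hP : st'.P n = st.P m := by
    ext γ
    simp only [ClauseState.P, ClauseState.S0, Set.mem_union, Set.mem_setOf_eq, hD, hS,
      Nat.zero_le, if_true]
    constructor
    · rintro ((h | ⟨i, h1, h2, h3'⟩) | ⟨i, h1, h2, h3'⟩)
      · exact Or.inl h
      · exact Or.inr ⟨i, by omega, h2, h3'⟩
      · rw [if_pos h2] at h3'
        exact Or.inr ⟨i, h1, by omega, h3'⟩
    · rintro (h | ⟨i, h1, h2, h3'⟩)
      · exact Or.inl (Or.inl h)
      · by_cases hi : i ≤ n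
        · exact Or.inr ⟨i, h1, hi, by rw [if_pos hi]; exact h3'⟩
        · exact Or.inl (Or.inr ⟨i, by omega, h2, h3'⟩)
  have hN'sub : ∀ γ ∈ st'.N n, γ ∈ st.A m ∪ st.Sall m := by
    rintro γ ⟨i, hin, hγ⟩
    rw [hD] at hγ
    simp only [if_pos hin, Set.mem_union, Set.mem_setOf_eq] at hγ
    rcases hγ with hγ | ⟨j, hj1, hj2, hγ⟩
    · exact Or.inl (Or.inl ⟨i, hin.trans hnm, hγ⟩)
    · exact Or.inr ⟨j, by omega, hj2, ⟨i, by omega, hγ⟩⟩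
  have key : ∀ k, ∀ i, ∀ α : Clause, i ≤ n → m - i ≤ k → α ∈ st.Sl i →
      ImpliesAt τ n (st'.N n) {α} := by
    intro k
    induction k using Nat.strong_induction_on with
    | _ k ih =>
      intro i α hin hk hα
      obtain ⟨q, hq, hαq⟩ := hα
      have hi1 : 1 ≤ i := by omega
      rcases h3 i hi1 (hin.trans hnm) α ⟨q, hq, hαq⟩ with
        ⟨r, hr, β, hβ, himp⟩ | ⟨r, hr, j, hij, hjm, β, hβ, himp⟩ | himp
      · have hβ' : β ∈ st'.N n := by
          refine ⟨r, hr.trans hin, ?_⟩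
          rw [hD]
          simp only [if_pos (hr.trans hin), Set.mem_union]
          exact Or.inl hβ
        exact impliesAt_trans (impliesAt_of_mem hβ') (impliesAt_mono hin himp)
      · by_cases hjn : j ≤ n
        · have hβ' : ImpliesAt τ n (st'.N n) {β} :=
            ih (m - j) (by omega) j β hjn le_rfl ⟨r, by omega, hβ⟩
          exact impliesAt_trans hβ' (impliesAt_mono hin himp)
        · have hβ' : β ∈ st'.N n := by
            refine ⟨r, hr.trans hin, ?_⟩
            rw [hD]
            simp only [if_pos (hr.trans hin), Set.mem_union, Set.mem_setOf_eq]
            exact Or.inr ⟨j, by omega, hjm, hβ⟩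
          exact impliesAt_trans (impliesAt_of_mem hβ') (impliesAt_mono hin himp)
      · exact impliesAt_weaken (Set.empty_subset _) (impliesAt_mono hin himp)
  refine ⟨?_, ⟨?_, ?_⟩, ?_, ?_⟩
  · -- Inv1
    show EquivAt τ 0 ↑I (st'.P n)
    rw [hP]; exact h1
  · -- Inv2, N' → P'
    intro σ hs hN c hc
    rcases hc with hc | ⟨i, hi0, hin, hc⟩
    · exact hN c ⟨0, Nat.zero_le n, hc⟩
    · rw [hS] at hc
      simp only [if_pos hin] at hc
      exact key m i c hin (Nat.sub_le m i) ⟨0, hi0, hc⟩ σ hs hN c rfl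
  · -- Inv2, P' → N'
    intro σ hs hP' c hc
    have := impliesAt_mono (Nat.zero_le n) (h4 c (hN'sub c hc))
    rw [← hP] at this
    exact this σ hs hP' c rfl
  · -- Inv3
    intro i hi1 hin α hα
    obtain ⟨q, hq, hαq⟩ := hα
    rw [hS] at hαq
    simp only [if_pos hin] at hαq
    rcases h3 i hi1 (hin.trans hnm) α ⟨q, hq, hαq⟩ with
      ⟨r, hr, β, hβ, himp⟩ | ⟨r, hr, j, hij, hjm, β, hβ, himp⟩ | himp
    · refine Or.inl ⟨r, hr, β, ?_, himp⟩
      rw [hD]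
      simp only [if_pos (hr.trans hin), Set.mem_union]
      exact Or.inl hβ
    · by_cases hjn : j ≤ n
      · refine Or.inr (Or.inl ⟨r, hr, j, hij, hjn, β, ?_, himp⟩)
        rw [hS]
        simp only [if_pos hjn]
        exact hβ
      · refine Or.inl ⟨r, hr, β, ?_, himp⟩
        rw [hD]
        simp only [if_pos (hr.trans hin), Set.mem_union, Set.mem_setOf_eq]
        exact Or.inr ⟨j, by omega, hjm, hβ⟩
    · exact Or.inr (Or.inr himp)
  · -- Inv4
    intro γ hγ
    show ImpliesAt τ 0 (st'.P n) {γ}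
    rw [hP]
    refine h4 γ ?_
    rcases hγ with (hγ | hγ) | ⟨i, h1i, hin, q, hq, hγq⟩
    · exact hN'sub γ hγ
    · rw [hDinf] at hγ
      exact Or.inl (Or.inr hγ)
    · rw [hS] at hγq
      simp only [if_pos hin] at hγq
      exact Or.inr ⟨i, h1i, by omega, q, hq, hγq⟩
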